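/- For the functions τ(t) = -log(t + e^{-t} - 1) and ρ(t) = τ(t) + log(1 - e^{-t}) on (0,∞), the quotient ρ'(t)²/τ''(t) tends to 1 as t → ∞. -/

import Mathlib

/-!
Write `u = e^{-t}`, `g = t + u - 1` and `n = 1 - u`, so that `τ' = -n/g`, `τ'' = (n² - u g)/g²` and
`ρ' = -n/g + u/n = -(n² - u g)/(n g)`. Hence `ρ'²/τ'' = 1 - u g/n²` exactly, and this tends to `1`
because `u g ≈ t e^{-t} → 0` while `n → 1`.
-/

open Real Filter Topology

lemma add_exp_neg_sub_one_pos {t : ℝ} (ht : 0 < t) : 0 < t + exp (-t) - 1 := by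
  linarith [add_one_lt_exp (x := -t) (by linarith)]

lemma one_sub_exp_neg_pos {t : ℝ} (ht : 0 < t) : 0 < 1 - exp (-t) := by
  linarith [exp_lt_one_iff.mpr (neg_lt_zero.mpr ht)]

lemma hasDerivAt_exp_neg (t : ℝ) : HasDerivAt (fun s => exp (-s)) (-exp (-t)) t := by
  simpa using (hasDerivAt_neg t).exp

lemma hasDerivAt_add_exp_neg_sub_one (t : ℝ) :
    HasDerivAt (fun s => s + exp (-s) - 1) (1 - exp (-t)) t := by
  simpa [← sub_eq_add_neg] using ((hasDerivAt_id t).add (hasDerivAt_exp_neg t)).sub_const 1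

lemma hasDerivAt_one_sub_exp_neg (t : ℝ) :
    HasDerivAt (fun s => 1 - exp (-s)) (exp (-t)) t := by
  simpa using (hasDerivAt_exp_neg t).const_sub 1

lemma hasDerivAt_neg_log_add_exp_neg_sub_one {t : ℝ} (ht : 0 < t) :
    HasDerivAt (fun s => -log (s + exp (-s) - 1))
      (-((1 - exp (-t)) / (t + exp (-t) - 1))) t :=
  ((hasDerivAt_add_exp_neg_sub_one t).log (add_exp_neg_sub_one_pos ht).ne').neg

lemma deriv_deriv_neg_log_add_exp_neg_sub_one {t : ℝ} (ht : 0 < t) :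
    deriv (deriv fun s => -log (s + exp (-s) - 1)) t =
      ((1 - exp (-t)) ^ 2 - exp (-t) * (t + exp (-t) - 1)) / (t + exp (-t) - 1) ^ 2 := by
  have h_deriv : deriv (fun s => -log (s + exp (-s) - 1)) =ᶠ[𝓝 t]
      fun s => -((1 - exp (-s)) / (s + exp (-s) - 1)) := by
    filter_upwards [Ioi_mem_nhds ht] with s hs
    exact (hasDerivAt_neg_log_add_exp_neg_sub_one hs).deriv
  rw [h_deriv.deriv_eq]
  refine (((hasDerivAt_one_sub_exp_neg t).div (hasDerivAt_add_exp_neg_sub_one t)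
    (add_exp_neg_sub_one_pos ht).ne').neg.congr_deriv ?_).deriv
  ring

-- When `n² = u g` both sides are `0`, the left one through `x / 0 = 0`.
lemma neg_div_add_div_sq_div_eq_one_sub {n g u : ℝ} (hn : n ≠ 0) (hg : g ≠ 0) :
    (-(n / g) + u / n) ^ 2 / ((n ^ 2 - u * g) / g ^ 2) = 1 - u * g / n ^ 2 := by
  rcases eq_or_ne (n ^ 2 - u * g) 0 with h | h
  · have : u * g = n ^ 2 := by linarith
    rw [h, zero_div, div_zero, this, div_self (pow_ne_zero 2 hn), sub_self]
  · have h_sum : -(n / g) + u / n = -(n ^ 2 - u * g) / (n * g) := by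
      field_simp
      ring
    rw [h_sum]
    field_simp

lemma tendsto_one_sub_exp_neg_mul_div_sq :
    Tendsto (fun t => 1 - exp (-t) * (t + exp (-t) - 1) / (1 - exp (-t)) ^ 2) atTop (𝓝 1) := by
  have hu := tendsto_exp_neg_atTop_nhds_zero
  have hn : Tendsto (fun t => 1 - exp (-t)) atTop (𝓝 1) := by
    simpa using hu.const_sub 1
  have hug : Tendsto (fun t => exp (-t) * (t + exp (-t) - 1)) atTop (𝓝 0) := by
    have htu : Tendsto (fun t => t * exp (-t)) atTop (𝓝 0) := by
      simpa using tendsto_pow_mul_exp_neg_atTop_nhds_zero 1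
    simpa [mul_add, mul_sub, mul_comm] using (htu.add (hu.mul hu)).sub hu
  simpa using (hug.div (hn.pow 2) (by norm_num)).const_sub 1

/-- For τ(t) = -log(t + e^{-t} - 1) and ρ(t) = τ(t) + log(1 - e^{-t}) on (0,∞),
the quotient ρ'(t)²/τ''(t) tends to 1 as t → ∞. -/
theorem tau_rho_quotient_tendsto_one
    (τ ρ : ℝ → ℝ)
    (hτ : ∀ t, τ t = -Real.log (t + Real.exp (-t) - 1))
    (hρ : ∀ t, ρ t = τ t + Real.log (1 - Real.exp (-t))) :
    Filter.Tendsto (fun t => (deriv ρ t) ^ 2 / (deriv (deriv τ) t))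
      Filter.atTop (nhds 1) := by
  obtain rfl : τ = fun t => -log (t + exp (-t) - 1) := funext hτ
  obtain rfl : ρ = fun t => -log (t + exp (-t) - 1) + log (1 - exp (-t)) := funext hρ
  refine tendsto_one_sub_exp_neg_mul_div_sq.congr' ?_
  filter_upwards [eventually_gt_atTop 0] with t ht
  have hn := (one_sub_exp_neg_pos ht).ne'
  have h_deriv_ρ : HasDerivAt (fun s => -log (s + exp (-s) - 1) + log (1 - exp (-s)))
      (-((1 - exp (-t)) / (t + exp (-t) - 1)) + exp (-t) / (1 - exp (-t))) t :=
    (hasDerivAt_neg_log_add_exp_neg_sub_one ht).add ((hasDerivAt_one_sub_exp_neg t).log hn)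
  rw [h_deriv_ρ.deriv, deriv_deriv_neg_log_add_exp_neg_sub_one ht,
    neg_div_add_div_sq_div_eq_one_sub hn (add_exp_neg_sub_one_pos ht).ne']
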